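/- For all ℓ, r ≥ 1, all e with 0 ≤ e ≤ ℓr, and every k ≥ 0, there exists a bipartite graph B with a fixed bipartition into parts X and Y of sizes ℓ and r and exactly e edges that minimizes m_k over all bipartite graphs with these part sizes and e edges, and whose open neighborhoods { N_B(u) : u ∈ X } are linearly ordered by inclusion (i.e., B is threshold bipartite). -/

import Mathlib

open Classical

/-- The set of matchings of a simple graph `G`: sets of pairwise non-incident edges
(the empty set counts). -/
noncomputable def graphMatchings {V : Type*} [Fintype V] (G : SimpleGraph V) :
    Finset (Finset (Sym2 V)) :=
  G.edgeFinset.powerset.filter fun M => ∀ e ∈ M, ∀ f ∈ M, e ≠ f → ∀ v : V, v ∈ e → v ∉ f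

/-- `m_k(G)`: the number of matchings of size `k` in `G`. -/
noncomputable def mkCount {V : Type*} [Fintype V] (G : SimpleGraph V) (k : ℕ) : ℕ :=
  ((graphMatchings G).filter fun M => M.card = k).card

/-- A graph on `Fin ℓ ⊕ Fin r` is bipartite with respect to the bipartition
`(Fin ℓ, Fin r)` when all its edges go between the two parts. -/
def IsBipartition {ℓ r : ℕ} (G : SimpleGraph (Fin ℓ ⊕ Fin r)) : Prop :=
  ∀ x y, G.Adj x y → (x.isLeft ∧ y.isRight) ∨ (x.isRight ∧ y.isLeft)

/-!
Encode a bipartite graph by the neighbourhoods `f w` of its left vertices. Replacing two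
incomparable neighbourhoods `f u`, `f v` by `f u ∪ f v`, `f u ∩ f v` keeps the number of edges,
strictly increases `∑ |f w|²` and does not increase `m_k`: a matching of the compressed graph
that uses an edge `u a` with `a ∉ f u` turns into a matching of the original graph of the same
size once `u` and `v` are exchanged, and the resulting map on matchings is injective. Hence an
`m_k`-minimizer maximizing `∑ |f w|²` has its neighbourhoods linearly ordered by inclusion.
-/

open Finset Function

theorem Finset.exists_minimizer_of_improvable {α β γ : Type*} [LinearOrder β] [LinearOrder γ]
    {S : Finset α} (hS : S.Nonempty) (φ : α → β) (ψ : α → γ) {P : α → Prop}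
    (h : ∀ x ∈ S, ¬ P x → ∃ y ∈ S, φ y ≤ φ x ∧ ψ x < ψ y) :
    ∃ x ∈ S, P x ∧ ∀ y ∈ S, φ x ≤ φ y := by
  obtain ⟨x₀, hx₀S, hx₀⟩ := S.exists_min_image φ hS
  obtain ⟨x, hx, hxmax⟩ := (S.filter (φ · ≤ φ x₀)).exists_max_image ψ ⟨x₀, by simp [hx₀S]⟩
  rw [mem_filter] at hx
  refine ⟨x, hx.1, by_contra fun hPx => ?_, fun y hy => hx.2.trans (hx₀ y hy)⟩
  obtain ⟨y, hyS, hφ, hψ⟩ := h x hx.1 hPx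
  exact (hxmax y (mem_filter.2 ⟨hyS, hφ.trans hx.2⟩)).not_gt hψ

theorem Finset.sq_card_add_sq_card_lt {α : Type*} {s t : Finset α} (hst : ¬ s ⊆ t)
    (hts : ¬ t ⊆ s) : #s ^ 2 + #t ^ 2 < #(s ∪ t) ^ 2 + #(s ∩ t) ^ 2 := by
  have hs : #(s ∩ t) < #s :=
    card_lt_card (inter_subset_left.ssubset_of_ne (mt inter_eq_left.1 hst))
  have ht : #(s ∩ t) < #t :=
    card_lt_card (inter_subset_right.ssubset_of_ne (mt inter_eq_right.1 hts))
  have := card_union_add_card_inter s t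
  nlinarith

theorem Fintype.sum_comp_update_add {ι β M : Type*} [Fintype ι] [AddCommMonoid M]
    (G : β → M) (h : ι → β) (i : ι) (b : β) :
    ∑ w, G (update h i b w) + G (h i) = ∑ w, G (h w) + G b := by
  have hcompl : ∀ w ∈ ({i}ᶜ : Finset ι), G (update h i b w) = G (h w) := fun w hw => by
    rw [update_of_ne (by simpa using hw)]
  rw [Fintype.sum_eq_add_sum_compl i, Fintype.sum_eq_add_sum_compl i (fun w => G (h w)),
    update_self, Finset.sum_congr rfl hcompl]
  abel

section nbhdGraph

variable {ι α : Type*}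

def nbhdGraph (f : ι → Finset α) : SimpleGraph (ι ⊕ α) where
  Adj
    | .inl w, .inr a => a ∈ f w
    | .inr a, .inl w => a ∈ f w
    | _, _ => False
  symm := ⟨by rintro (w | a) (w' | a') h <;> exact h⟩
  loopless := ⟨by rintro (w | a) h <;> exact h⟩

variable {f : ι → Finset α} {w w' : ι} {a a' : α}

@[simp] theorem nbhdGraph_adj_inl_inr : (nbhdGraph f).Adj (.inl w) (.inr a) ↔ a ∈ f w := Iff.rfl
@[simp] theorem nbhdGraph_adj_inr_inl : (nbhdGraph f).Adj (.inr a) (.inl w) ↔ a ∈ f w := Iff.rfl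
@[simp] theorem not_nbhdGraph_adj_inl_inl : ¬ (nbhdGraph f).Adj (.inl w) (.inl w') := id
@[simp] theorem not_nbhdGraph_adj_inr_inr : ¬ (nbhdGraph f).Adj (.inr a) (.inr a') := id

theorem exists_eq_of_mem_edgeSet_nbhdGraph {e : Sym2 (ι ⊕ α)} (he : e ∈ (nbhdGraph f).edgeSet) :
    ∃ w a, a ∈ f w ∧ e = s(.inl w, .inr a) := by
  induction e using Sym2.ind with
  | h x y =>
    rcases x with w | a <;> rcases y with w' | a' <;> simp at he
    · exact ⟨w, a', he, rfl⟩
    · exact ⟨w', a, he, Sym2.eq_swap⟩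

theorem edgeSet_nbhdGraph :
    (nbhdGraph f).edgeSet =
      (fun p : Σ _ : ι, α => s(.inl p.1, .inr p.2)) '' {p | p.2 ∈ f p.1} := by
  ext e
  constructor
  · intro he
    obtain ⟨w, a, ha, rfl⟩ := exists_eq_of_mem_edgeSet_nbhdGraph he
    exact ⟨⟨w, a⟩, ha, rfl⟩
  · rintro ⟨⟨w, a⟩, ha, rfl⟩
    exact ha

theorem ncard_edgeSet_nbhdGraph [Fintype ι] : (nbhdGraph f).edgeSet.ncard = ∑ w, #(f w) := by
  have hinj : Injective (fun p : Σ _ : ι, α => (s(.inl p.1, .inr p.2) : Sym2 (ι ⊕ α))) := by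
    rintro ⟨w, a⟩ ⟨w', a'⟩ h
    simp_all
  rw [edgeSet_nbhdGraph, Set.ncard_image_of_injective _ hinj, ← card_sigma,
    ← Set.ncard_coe_finset]
  congr
  ext ⟨w, a⟩
  simp

theorem neighborSet_inl_subset_of_subset (h : f w ⊆ f w') :
    (nbhdGraph f).neighborSet (.inl w) ⊆ (nbhdGraph f).neighborSet (.inl w') := by
  rintro (w'' | a) ha
  exacts [ha.elim, h ha]

theorem exists_sum_card_eq [Fintype ι] [Fintype α] {e : ℕ}
    (he : e ≤ Fintype.card ι * Fintype.card α) : ∃ f : ι → Finset α, ∑ w, #(f w) = e := by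
  obtain ⟨t, -, ht⟩ := exists_subset_card_eq (s := (univ : Finset (Σ _ : ι, α))) (by simpa)
  refine ⟨fun w => univ.filter fun a => ⟨w, a⟩ ∈ t, ?_⟩
  rw [← card_sigma, ← ht]
  congr
  ext ⟨w, a⟩
  simp

end nbhdGraph

theorem isBipartition_nbhdGraph {ℓ r : ℕ} (f : Fin ℓ → Finset (Fin r)) :
    IsBipartition (nbhdGraph f) := by
  rintro (w | a) (w' | a') h <;> simp_all

noncomputable def leftNbhds {ℓ r : ℕ} (B : SimpleGraph (Fin ℓ ⊕ Fin r)) (w : Fin ℓ) :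
    Finset (Fin r) :=
  univ.filter fun a => B.Adj (.inl w) (.inr a)

theorem nbhdGraph_leftNbhds {ℓ r : ℕ} {B : SimpleGraph (Fin ℓ ⊕ Fin r)} (hB : IsBipartition B) :
    nbhdGraph (leftNbhds B) = B := by
  ext (w | a) (w' | a')
  · simpa using fun h => by simpa using hB _ _ h
  · simp [leftNbhds]
  · simp [leftNbhds, B.adj_comm]
  · simpa using fun h => by simpa using hB _ _ h

section compress

variable {ι α : Type*} (f : ι → Finset α) (u v : ι)

noncomputable def compress : ι → Finset α := update (update f u (f u ∪ f v)) v (f u ∩ f v)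

variable {f u v} {w : ι} {a : α}

theorem compress_left (huv : u ≠ v) : compress f u v u = f u ∪ f v := by
  simp [compress, update_of_ne huv]

theorem compress_right : compress f u v v = f u ∩ f v := by simp [compress]

theorem compress_of_ne (hwu : w ≠ u) (hwv : w ≠ v) : compress f u v w = f w := by
  simp [compress, update_of_ne hwu, update_of_ne hwv]

theorem mem_of_mem_compress (hwu : w ≠ u) (ha : a ∈ compress f u v w) : a ∈ f w := by
  obtain rfl | hwv := eq_or_ne w v
  · exact (mem_inter.1 (compress_right ▸ ha)).2
  · rwa [compress_of_ne hwu hwv] at ha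

theorem mem_swap_of_mem_compress (hwu : w ≠ u) (ha : a ∈ compress f u v w) :
    a ∈ f (Equiv.swap u v w) := by
  obtain rfl | hwv := eq_or_ne w v
  · simpa using (mem_inter.1 (compress_right ▸ ha)).1
  · rw [Equiv.swap_apply_of_ne_of_ne hwu hwv]
    exact mem_of_mem_compress hwu ha

theorem sum_comp_compress_add {M : Type*} [Fintype ι] [AddCommMonoid M] (huv : u ≠ v)
    (G : Finset α → M) :
    ∑ w, G (compress f u v w) + (G (f u) + G (f v)) =
      ∑ w, G (f w) + (G (f u ∪ f v) + G (f u ∩ f v)) := by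
  have h₁ := Fintype.sum_comp_update_add G (update f u (f u ∪ f v)) v (f u ∩ f v)
  have h₂ := Fintype.sum_comp_update_add G f u (f u ∪ f v)
  rw [update_of_ne huv.symm] at h₁
  rw [compress, ← add_assoc, add_right_comm, h₁, add_right_comm, h₂]
  abel

theorem sum_card_compress [Fintype ι] (huv : u ≠ v) :
    ∑ w, #(compress f u v w) = ∑ w, #(f w) := by
  have := sum_comp_compress_add (f := f) huv card
  rw [card_union_add_card_inter] at this
  omega

theorem sum_sq_card_lt_sum_sq_card_compress [Fintype ι] (huv : u ≠ v) (hu : ¬ f u ⊆ f v)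
    (hv : ¬ f v ⊆ f u) : ∑ w, #(f w) ^ 2 < ∑ w, #(compress f u v w) ^ 2 := by
  have := sum_comp_compress_add (f := f) huv (#· ^ 2)
  have := sq_card_add_sq_card_lt hu hv
  omega

end compress

section matchings

variable {V : Type*} [Fintype V] {G : SimpleGraph V} {M : Finset (Sym2 V)}

theorem mem_graphMatchings :
    M ∈ graphMatchings G ↔
      (∀ e ∈ M, e ∈ G.edgeSet) ∧ ∀ e ∈ M, ∀ e' ∈ M, e ≠ e' → ∀ x ∈ e, x ∉ e' := by
  simp [graphMatchings, subset_iff]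

theorem mem_graphMatchings_of_forall_mem_edgeSet {H : SimpleGraph V} (hM : M ∈ graphMatchings G)
    (hH : ∀ e ∈ M, e ∈ H.edgeSet) : M ∈ graphMatchings H :=
  mem_graphMatchings.2 ⟨hH, (mem_graphMatchings.1 hM).2⟩

theorem image_map_mem_graphMatchings {W : Type*} [Fintype W] [DecidableEq W]
    {H : SimpleGraph W} {σ : V → W} (hσ : Injective σ) (hM : M ∈ graphMatchings G)
    (hH : ∀ e ∈ M, Sym2.map σ e ∈ H.edgeSet) : M.image (Sym2.map σ) ∈ graphMatchings H := by
  refine mem_graphMatchings.2 ⟨by simpa using hH, ?_⟩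
  simp only [mem_image]
  rintro _ ⟨e, he, rfl⟩ _ ⟨e', he', rfl⟩ hne _ hx hx'
  obtain ⟨x, hxe, rfl⟩ := Sym2.mem_map.1 hx
  obtain ⟨y, hye, hyx⟩ := Sym2.mem_map.1 hx'
  exact (mem_graphMatchings.1 hM).2 e he e' he' (fun h => hne (h ▸ rfl)) x hxe (hσ hyx ▸ hye)

end matchings

section decompress

variable {ι α : Type*} {f : ι → Finset α} {u v : ι}

noncomputable def decompress (f : ι → Finset α) (u v : ι) (M : Finset (Sym2 (ι ⊕ α))) :
    Finset (Sym2 (ι ⊕ α)) :=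
  if ∃ a ∉ f u, s(.inl u, .inr a) ∈ M then
    M.image (Sym2.map (Equiv.sumCongr (Equiv.swap u v) (Equiv.refl α)))
  else M

theorem card_decompress (M : Finset (Sym2 (ι ⊕ α))) : #(decompress f u v M) = #M := by
  unfold decompress
  split_ifs
  exacts [card_image_of_injective _ (Sym2.map.injective (Equiv.injective _)), rfl]

theorem decompress_mem_graphMatchings [Fintype ι] [Fintype α] (huv : u ≠ v)
    {M : Finset (Sym2 (ι ⊕ α))} (hM : M ∈ graphMatchings (nbhdGraph (compress f u v))) :
    decompress f u v M ∈ graphMatchings (nbhdGraph f) := by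
  have hedge := (mem_graphMatchings.1 hM).1
  unfold decompress
  split_ifs with huses
  · obtain ⟨a₀, ha₀, hmem⟩ := huses
    apply image_map_mem_graphMatchings (Equiv.injective _) hM
    intro e he
    obtain ⟨w, a, ha, rfl⟩ := exists_eq_of_mem_edgeSet_nbhdGraph (hedge e he)
    show a ∈ f (Equiv.swap u v w)
    obtain rfl | hwu := eq_or_ne u w
    · obtain rfl : a = a₀ := by
        by_contra hne
        exact (mem_graphMatchings.1 hM).2 _ he _ hmem (by simpa using hne) (.inl u) (by simp)
          (by simp)
      have ha : a ∈ f u ∪ f v := compress_left huv ▸ hedge _ hmem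
      simpa using (mem_union.1 ha).resolve_left ha₀
    · exact mem_swap_of_mem_compress hwu.symm ha
  · refine mem_graphMatchings_of_forall_mem_edgeSet hM fun e he => ?_
    obtain ⟨w, a, ha, rfl⟩ := exists_eq_of_mem_edgeSet_nbhdGraph (hedge e he)
    show a ∈ f w
    obtain rfl | hwu := eq_or_ne w u
    · exact by_contra fun h => huses ⟨a, h, he⟩
    · exact mem_of_mem_compress hwu ha

theorem decompress_injOn [Fintype ι] [Fintype α] :
    Set.InjOn (decompress f u v) (graphMatchings (nbhdGraph (compress f u v))) := by
  -- a decompressed matching that was changed contains an edge `v a` with `a ∉ f u`,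
  -- which no matching of the compressed graph contains
  have hchanged : ∀ {M₁ M₂ : Finset (Sym2 (ι ⊕ α))},
      M₂ ∈ graphMatchings (nbhdGraph (compress f u v)) → (∃ a ∉ f u, s(.inl u, .inr a) ∈ M₁) →
      M₁.image (Sym2.map (Equiv.sumCongr (Equiv.swap u v) (Equiv.refl α))) ≠ M₂ := by
    rintro M₁ M₂ hM₂ ⟨a, ha, hmem⟩ rfl
    have hv := (mem_graphMatchings.1 hM₂).1 _ (mem_image_of_mem _ hmem)
    simp only [Sym2.map_mk, Equiv.sumCongr_apply, Sum.map_inl, Sum.map_inr, Equiv.swap_apply_left,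
      Equiv.coe_refl, id, SimpleGraph.mem_edgeSet, nbhdGraph_adj_inl_inr, compress_right] at hv
    exact ha (mem_inter.1 hv).1
  intro M₁ hM₁ M₂ hM₂ h
  unfold decompress at h
  split_ifs at h with h₁ h₂ h₂
  · exact image_injective (Sym2.map.injective (Equiv.injective _)) h
  · exact (hchanged hM₂ h₁ h).elim
  · exact (hchanged hM₁ h₂ h.symm).elim
  · exact h

theorem mkCount_nbhdGraph_compress_le [Fintype ι] [Fintype α] (huv : u ≠ v) (k : ℕ) :
    mkCount (nbhdGraph (compress f u v)) k ≤ mkCount (nbhdGraph f) k := by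
  refine card_le_card_of_injOn (decompress f u v) (fun M hM => ?_)
    (decompress_injOn.mono fun M hM => (mem_filter.1 hM).1)
  rw [mem_coe, mem_filter] at hM ⊢
  exact ⟨decompress_mem_graphMatchings huv hM.1, (card_decompress M).trans hM.2⟩

end decompress

theorem exists_threshold_bipartite_minimizer_general (ℓ r e k : ℕ) (he : e ≤ ℓ * r) :
    ∃ B : SimpleGraph (Fin ℓ ⊕ Fin r), IsBipartition B ∧ B.edgeSet.ncard = e ∧
      (∀ B' : SimpleGraph (Fin ℓ ⊕ Fin r), IsBipartition B' → B'.edgeSet.ncard = e →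
        mkCount B k ≤ mkCount B' k) ∧
      (∀ u v : Fin ℓ, B.neighborSet (Sum.inl u) ⊆ B.neighborSet (Sum.inl v) ∨
        B.neighborSet (Sum.inl v) ⊆ B.neighborSet (Sum.inl u)) := by
  set S := univ.filter fun f : Fin ℓ → Finset (Fin r) => ∑ w, #(f w) = e
  have hS : S.Nonempty := by
    obtain ⟨f, hf⟩ := exists_sum_card_eq (ι := Fin ℓ) (α := Fin r) (by simpa using he)
    exact ⟨f, by simpa [S] using hf⟩
  obtain ⟨f, hfS, hchain, hmin⟩ := exists_minimizer_of_improvable hS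
    (fun f => mkCount (nbhdGraph f) k) (fun f => ∑ w, #(f w) ^ 2)
    (P := fun f => ∀ u v, f u ⊆ f v ∨ f v ⊆ f u) <| by
      intro f hf hP
      simp only [not_forall, not_or] at hP
      obtain ⟨u, v, hu, hv⟩ := hP
      have huv : u ≠ v := by rintro rfl; exact hu subset_rfl
      refine ⟨compress f u v, ?_, mkCount_nbhdGraph_compress_le huv k,
        sum_sq_card_lt_sum_sq_card_compress huv hu hv⟩
      simpa [S, sum_card_compress huv] using hf
  refine ⟨nbhdGraph f, isBipartition_nbhdGraph f,
    ncard_edgeSet_nbhdGraph.trans (mem_filter.1 hfS).2, fun B hB hBe => ?_,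
    fun u v => (hchain u v).imp neighborSet_inl_subset_of_subset neighborSet_inl_subset_of_subset⟩
  rw [← nbhdGraph_leftNbhds hB]
  refine hmin _ (mem_filter.2 ⟨mem_univ _, ?_⟩)
  rw [← ncard_edgeSet_nbhdGraph, nbhdGraph_leftNbhds hB, hBe]

/-- For all `ℓ, r ≥ 1`, `0 ≤ e ≤ ℓr`, and every `k ≥ 0`, there is a bipartite graph with
parts of sizes `ℓ` and `r` and exactly `e` edges that minimizes `m_k` over all bipartite
graphs with these part sizes and `e` edges, and that is threshold bipartite: the open
neighborhoods of the left-part vertices are linearly ordered by inclusion. -/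
theorem exists_threshold_bipartite_minimizer (ℓ r e k : ℕ) (hl : 1 ≤ ℓ) (hr : 1 ≤ r)
    (he : e ≤ ℓ * r) :
    ∃ B : SimpleGraph (Fin ℓ ⊕ Fin r), IsBipartition B ∧ B.edgeSet.ncard = e ∧
      (∀ B' : SimpleGraph (Fin ℓ ⊕ Fin r), IsBipartition B' → B'.edgeSet.ncard = e →
        mkCount B k ≤ mkCount B' k) ∧
      (∀ u v : Fin ℓ, B.neighborSet (Sum.inl u) ⊆ B.neighborSet (Sum.inl v) ∨
        B.neighborSet (Sum.inl v) ⊆ B.neighborSet (Sum.inl u)) :=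
  exists_threshold_bipartite_minimizer_general ℓ r e k he
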